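/- arXiv:2206.04841 — 3 statements merged into one kernel-verified Lean document; each statement's English description precedes it below -/
import Mathlib

section
/- Let p(x,y; θ_X, θ_Y, Θ_XY) be a harmonium. The prior p(y) is proportional to ν_Y(y)exp(s_Y(y)·θ*_Y) for some θ*_Y if and only if there exist a vector ρ_Y and a constant ρ_0 such that ψ_X(θ_X + Θ_XY·s_Y(y)) = s_Y(y)·ρ_Y + ρ_0 for all y, and in that case θ*_Y = θ_Y + ρ_Y. -/
open MeasureTheory Matrix

/-- The prior `p(y)` of a harmonium is proportional to
`νY(y)·exp(sY(y)·θ*Y)` for some `θ*Y` iff there exist `ρY, ρ0` with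
`ψX(θX + ΘXY·sY(y)) = sY(y)·ρY + ρ0` for all `y`; in that case
`θ*Y = θY + ρY`. -/
theorem harmonium_conjugation
    {X Y : Type*} [MeasurableSpace X] [MeasurableSpace Y]
    (νX : Measure X) (νY : Measure Y) {dX dY : ℕ}
    (sX : X → Fin dX → ℝ) (sY : Y → Fin dY → ℝ)
    (θX : Fin dX → ℝ) (θY : Fin dY → ℝ) (ΘXY : Matrix (Fin dX) (Fin dY) ℝ)
    -- observable log-partition function
    (ψX : (Fin dX → ℝ) → ℝ)
    (hψX : ∀ η, ψX η = Real.log (∫ x, Real.exp (sX x ⬝ᵥ η) ∂νX))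
    -- the unnormalized prior density of `Y` with respect to `νY`
    (g : Y → ℝ)
    (hg : ∀ y, g y = Real.exp (sY y ⬝ᵥ θY + ψX (θX + ΘXY.mulVec (sY y))))
    -- integrability of the observable family at the shifted parameters
    (hint : ∀ y, Integrable (fun x => Real.exp (sX x ⬝ᵥ (θX + ΘXY.mulVec (sY y)))) νX)
    (hpos : ∀ y, 0 < ∫ x, Real.exp (sX x ⬝ᵥ (θX + ΘXY.mulVec (sY y))) ∂νX)
    -- minimality of the latent sufficient statistic: its components together
    -- with the constant function are linearly independent
    (hmin : ∀ (a : Fin dY → ℝ) (b : ℝ), (∀ y, sY y ⬝ᵥ a + b = 0) → a = 0 ∧ b = 0) :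
    ((∃ (c : ℝ) (θstar : Fin dY → ℝ), 0 < c ∧
        ∀ y, g y = c * Real.exp (sY y ⬝ᵥ θstar)) ↔
      (∃ (ρY : Fin dY → ℝ) (ρ0 : ℝ),
        ∀ y, ψX (θX + ΘXY.mulVec (sY y)) = sY y ⬝ᵥ ρY + ρ0)) ∧
    (∀ (c : ℝ) (θstar : Fin dY → ℝ) (ρY : Fin dY → ℝ) (ρ0 : ℝ),
      (0 < c ∧ ∀ y, g y = c * Real.exp (sY y ⬝ᵥ θstar)) →
      (∀ y, ψX (θX + ΘXY.mulVec (sY y)) = sY y ⬝ᵥ ρY + ρ0) →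
      θstar = θY + ρY) := by
  constructor
  · constructor
    · rintro ⟨c, θstar, hc, h⟩
      refine ⟨θstar - θY, Real.log c, fun y => ?_⟩
      have h1 : Real.exp (sY y ⬝ᵥ θY + ψX (θX + ΘXY.mulVec (sY y)))
          = Real.exp (Real.log c + sY y ⬝ᵥ θstar) := by
        rw [← hg y, h y, Real.exp_add, Real.exp_log hc]
      have h2 := Real.exp_injective h1
      have : ψX (θX + ΘXY.mulVec (sY y)) = Real.log c + sY y ⬝ᵥ θstar - sY y ⬝ᵥ θY := by
        linarith
      rw [this, dotProduct_sub]
      ring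
    · rintro ⟨ρY, ρ0, h⟩
      refine ⟨Real.exp ρ0, θY + ρY, Real.exp_pos _, fun y => ?_⟩
      rw [hg y, h y, ← Real.exp_add, dotProduct_add]
      ring_nf
  · rintro c θstar ρY ρ0 ⟨hc, h1⟩ h2
    have key : ∀ y, sY y ⬝ᵥ (θY + ρY - θstar) + (ρ0 - Real.log c) = 0 := by
      intro y
      have e1 : Real.exp (sY y ⬝ᵥ θY + (sY y ⬝ᵥ ρY + ρ0))
          = Real.exp (Real.log c + sY y ⬝ᵥ θstar) := by
        rw [← h2 y, ← hg y, h1 y, Real.exp_add, Real.exp_log hc]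
      have e2 := Real.exp_injective e1
      rw [dotProduct_sub, dotProduct_add]
      linarith
    have := (hmin _ _ key).1
    have h3 : θY + ρY - θstar = 0 := this
    have : θstar = θY + ρY := by
      funext i
      have := congrFun h3 i
      simp only [Pi.sub_apply, Pi.add_apply, Pi.zero_apply] at this
      simp only [Pi.add_apply]
      linarith
    exact this
end

section
/- Suppose p(x,y; θ_X, θ_Y, Θ_XY) is a conjugated harmonium with conjugation parameters ρ_Y and ρ_0, i.e., ψ_X(θ_X + Θ_XY·s_Y(y)) = s_Y(y)·ρ_Y + ρ_0 for all y. Then the harmonium log-partition function satisfies ψ_XY(θ_X, θ_Y, Θ_XY) = ψ_Y(θ_Y + ρ_Y) + ρ_0. -/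
open MeasureTheory Matrix

/-- For a conjugated harmonium with conjugation parameters
`ρY, ρ0`, the joint log-partition function satisfies
`ψXY(θX,θY,ΘXY) = ψY(θY + ρY) + ρ0`. -/
theorem conjugated_harmonium_log_partition
    {X Y : Type*} [MeasurableSpace X] [MeasurableSpace Y]
    (νX : Measure X) (νY : Measure Y) {dX dY : ℕ}
    (sX : X → Fin dX → ℝ) (sY : Y → Fin dY → ℝ)
    (θX : Fin dX → ℝ) (θY : Fin dY → ℝ) (ΘXY : Matrix (Fin dX) (Fin dY) ℝ)
    -- unnormalized joint density with respect to `νX × νY`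
    (f : X → Y → ℝ)
    (hf : ∀ x y, f x y =
      Real.exp (sX x ⬝ᵥ θX + sY y ⬝ᵥ θY + sX x ⬝ᵥ ΘXY.mulVec (sY y)))
    -- observable, latent, and joint log-partition functions
    (ψX : (Fin dX → ℝ) → ℝ)
    (hψX : ∀ η, ψX η = Real.log (∫ x, Real.exp (sX x ⬝ᵥ η) ∂νX))
    (ψY : (Fin dY → ℝ) → ℝ)
    (hψY : ∀ η, ψY η = Real.log (∫ y, Real.exp (sY y ⬝ᵥ η) ∂νY))
    (ψXY : ℝ)
    (hψXY : ψXY = Real.log (∫ y, ∫ x, f x y ∂νX ∂νY))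
    -- convergence assumptions
    (hintX : ∀ y, Integrable (fun x => Real.exp (sX x ⬝ᵥ (θX + ΘXY.mulVec (sY y)))) νX)
    (hposX : ∀ y, 0 < ∫ x, Real.exp (sX x ⬝ᵥ (θX + ΘXY.mulVec (sY y)))  ∂νX)
    -- conjugation: `ψX(θX + ΘXY·sY(y))` is affine in `sY(y)`
    (ρY : Fin dY → ℝ) (ρ0 : ℝ)
    (hconj : ∀ y, ψX (θX + ΘXY.mulVec (sY y)) = sY y ⬝ᵥ ρY + ρ0)
    (hintY : Integrable (fun y => Real.exp (sY y ⬝ᵥ (θY + ρY))) νY)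
    (hposY : 0 < ∫ y, Real.exp (sY y ⬝ᵥ (θY + ρY)) ∂νY) :
    ψXY = ψY (θY + ρY) + ρ0 := by
  have hinner : ∀ y, (∫ x, f x y ∂νX)
      = Real.exp ρ0 * Real.exp (sY y ⬝ᵥ (θY + ρY)) := by
    intro y
    have h1 : (∫ x, f x y ∂νX)
        = Real.exp (sY y ⬝ᵥ θY) * ∫ x, Real.exp (sX x ⬝ᵥ (θX + ΘXY.mulVec (sY y))) ∂νX := by
      rw [← integral_const_mul]
      refine integral_congr_ae (Filter.Eventually.of_forall fun x => ?_)
      simp only [hf, ← Real.exp_add, dotProduct_add]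
      ring_nf
    have h2 : (∫ x, Real.exp (sX x ⬝ᵥ (θX + ΘXY.mulVec (sY y))) ∂νX)
        = Real.exp (sY y ⬝ᵥ ρY + ρ0) := by
      rw [← hconj y, hψX, Real.exp_log (hposX y)]
    rw [h1, h2, ← Real.exp_add, ← Real.exp_add, dotProduct_add]
    ring_nf
  rw [hψXY, hψY]
  have : (∫ y, ∫ x, f x y ∂νX ∂νY)
      = Real.exp ρ0 * ∫ y, Real.exp (sY y ⬝ᵥ (θY + ρY)) ∂νY := by
    rw [← integral_const_mul]
    exact integral_congr_ae (Filter.Eventually.of_forall fun y => hinner y)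
  rw [this, Real.log_mul (Real.exp_ne_zero _) (ne_of_gt hposY), Real.log_exp]
  ring
end

section
/- Let p(x,y) be a linear Gaussian model with natural parameters θ_X = (θ^μ_X, Θ_XX), θ_Y, and interaction Θ_XY (so that p(x,y) ∝ exp(s_X(x)·θ_X + s_Y(y)·θ_Y + x·Θ_XY·y)). Then p is a conjugated harmonium with conjugation parameters ρ_0 = −¼ θ^μ_X·Θ_XX^{−1}·θ^μ_X − ½ log|−2Θ_XX| and ρ_Y = (ρ^μ_Y, P_YY) with ρ^μ_Y = −½ Θ_YX·Θ_XX^{−1}·θ^μ_X and P_YY = −¼ Θ_YX·Θ_XX^{−1}·Θ_XY, i.e., ψ_X(θ^μ_X + Θ_XY·y, Θ_XX) = y·ρ^μ_Y + y·P_YY·y + ρ_0 for all y. -/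
open Matrix

/-- A linear Gaussian model (harmonium over two multivariate
normal families whose interaction couples only first-order statistics) is
conjugated, with conjugation parameters
`ρ0 = −¼ θμX·ΘXX⁻¹·θμX − ½ log|−2ΘXX|`,
`ρμY = −½ ΘYX·ΘXX⁻¹·θμX`, and `PYY = −¼ ΘYX·ΘXX⁻¹·ΘXY`:
`ψX(θμX + ΘXY·y, ΘXX) = y·ρμY + y·PYY·y + ρ0` for all `y`,
where `ψX` is the multivariate normal log-partition function. -/
theorem linear_gaussian_conjugation
    {n m : ℕ}
    (θμX : Fin n → ℝ) (ΘXX : Matrix (Fin n) (Fin n) ℝ)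
    (ΘXY : Matrix (Fin n) (Fin m) ℝ)
    (hneg : (-ΘXX).PosDef)
    -- the multivariate normal log-partition function
    (ψX : (Fin n → ℝ) → Matrix (Fin n) (Fin n) ℝ → ℝ)
    (hψX : ∀ a B, ψX a B = -(1/4 : ℝ) * (a ⬝ᵥ B⁻¹.mulVec a)
      - (1/2 : ℝ) * Real.log (((-2 : ℝ) • B).det))
    (ρ0 : ℝ) (ρμY : Fin m → ℝ) (PYY : Matrix (Fin m) (Fin m) ℝ)
    (hρ0 : ρ0 = -(1/4 : ℝ) * (θμX ⬝ᵥ ΘXX⁻¹.mulVec θμX)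
      - (1/2 : ℝ) * Real.log (((-2 : ℝ) • ΘXX).det))
    (hρμY : ρμY = (-(1/2 : ℝ)) • (ΘXYᵀ.mulVec (ΘXX⁻¹.mulVec θμX)))
    (hPYY : PYY = (-(1/4 : ℝ)) • (ΘXYᵀ * ΘXX⁻¹ * ΘXY)) :
    ∀ y : Fin m → ℝ,
      ψX (θμX + ΘXY.mulVec y) ΘXX = y ⬝ᵥ ρμY + y ⬝ᵥ PYY.mulVec y + ρ0 := by
  intro y
  subst hρ0 hρμY hPYY
  rw [hψX]
  have hsym : ΘXXᵀ = ΘXX := by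
    ext i j
    have := congrFun (congrFun hneg.1 i) j
    simpa using this
  have hinv : (ΘXX⁻¹)ᵀ = ΘXX⁻¹ := by
    rw [show ΘXX⁻¹ᵀ = ΘXXᵀ⁻¹ from Matrix.transpose_nonsing_inv _, hsym]
  set A := ΘXX⁻¹
  set v := ΘXY.mulVec y with hv
  have cross : θμX ⬝ᵥ A.mulVec v = v ⬝ᵥ A.mulVec θμX := by
    rw [Matrix.dotProduct_mulVec, ← Matrix.mulVec_transpose, hinv, dotProduct_comm]
  have h1 : y ⬝ᵥ ΘXYᵀ.mulVec (A.mulVec θμX) = v ⬝ᵥ A.mulVec θμX := by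
    rw [Matrix.dotProduct_mulVec, Matrix.vecMul_transpose, ← hv]
  have h2 : y ⬝ᵥ (ΘXYᵀ * A * ΘXY).mulVec y = v ⬝ᵥ A.mulVec v := by
    rw [← Matrix.mulVec_mulVec, ← Matrix.mulVec_mulVec, Matrix.dotProduct_mulVec,
      Matrix.vecMul_transpose, ← hv]
  simp only [Matrix.mulVec_add, dotProduct_add, add_dotProduct, Matrix.smul_mulVec,
    dotProduct_smul, smul_eq_mul, h2]
  rw [cross, h1]
  ring
end
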